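/- Let (d_{n,k}) = (g; f_1,…,f_ℓ) be a multiple Riordan array and let (d̂_{n,k}) be its compression, d̂_{n,k} = d_{nℓ−(ℓ−1)k, k}. Then for all n ≥ k ≥ 0, writing k = qℓ + m with 0 ≤ m ≤ ℓ−1: d̂_{n,k} = [t^n]( ĝ · f̂_1 ⋯ f̂_m · (f̂_1 f̂_2 ⋯ f̂_ℓ)^q ) (empty product equal to 1, so d̂_{n,0} = [t^n] ĝ), where ĝ = Σ_{k≥0} g_k t^k and f̂_i = Σ_{k≥0} f_{i,k} t^{k+1}. -/

import Mathlib

open PowerSeries Finset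

/-- Formal substitution `F(u)`: for `u` with zero constant term, the `n`-th coefficient of
`F(u)` is `∑_{k ≤ n} F_k · [t^n] u^k`. -/
noncomputable def psComp {K : Type*} [CommRing K] (F u : K⟦X⟧) : K⟦X⟧ :=
  PowerSeries.mk fun n => ∑ k ∈ Finset.range (n + 1), coeff k F * coeff n (u ^ k)

/-- Entry `d_{n,k}` of the multiple Riordan array `(g; f_0, …, f_{ℓ-1})`: the `k`-th column,
`k = qℓ + m`, has generating function `g · f_0⋯f_{m-1} · (f_0⋯f_{ℓ-1})^q`. -/
noncomputable def mrEntry {K : Type*} [CommRing K] (ℓ : ℕ) (g : K⟦X⟧) (f : ℕ → K⟦X⟧)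
    (n k : ℕ) : K :=
  coeff n (g * (∏ i ∈ Finset.range (k % ℓ), f i) * (∏ i ∈ Finset.range ℓ, f i) ^ (k / ℓ))

/-!
A series supported on exponents `≡ r (mod ℓ)` is `X ^ r` times an `ℓ`-fold expansion
`A(t) ↦ A(t ^ ℓ)`, and compressing it means dropping the expansion. So `g = ĝ(t ^ ℓ)` and
`f_i = t · φ_i(t ^ ℓ)` with `f̂_i = t · φ_i`; since expansion is a ring homomorphism, the `k`-th
column is `t ^ k · P(t ^ ℓ)` while the compressed one is `t ^ k · P(t)` for the same `P`.
The entry `d_{nℓ−(ℓ−1)k,k}` sits at exponent `ℓ(n−k) + k`, so it is `[t^(n−k)] P`.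
-/

section Column

variable {M N : Type*} [CommMonoid M] [CommMonoid N]

def mrColumn (ℓ : ℕ) (a : M) (w : ℕ → M) (k : ℕ) : M :=
  a * (∏ i ∈ range (k % ℓ), w i) * (∏ i ∈ range ℓ, w i) ^ (k / ℓ)

theorem mrEntry_eq_coeff_mrColumn {R : Type*} [CommRing R] (ℓ : ℕ) (g : R⟦X⟧)
    (f : ℕ → R⟦X⟧) (n k : ℕ) : mrEntry ℓ g f n k = coeff n (mrColumn ℓ g f k) :=
  rfl

theorem mrColumn_mul_left (ℓ : ℕ) (a x : M) (w : ℕ → M) (k : ℕ) :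
    mrColumn ℓ a (fun i => x * w i) k = x ^ k * mrColumn ℓ a w k := by
  have hx : x ^ k = x ^ (k % ℓ) * (x ^ ℓ) ^ (k / ℓ) := by
    rw [← pow_mul, ← pow_add, Nat.mod_add_div]
  simp only [mrColumn, prod_mul_distrib, prod_const, card_range, hx, mul_pow]
  ac_rfl

theorem map_mrColumn {F : Type*} [FunLike F M N] [MonoidHomClass F M N] (φ : F) (ℓ : ℕ)
    (a : M) (w : ℕ → M) (k : ℕ) :
    φ (mrColumn ℓ a w k) = mrColumn ℓ (φ a) (fun i => φ (w i)) k := by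
  simp only [mrColumn, map_mul, map_pow, map_prod]

theorem mrColumn_congr {ℓ : ℕ} (hℓ : ℓ ≠ 0) (a : M) {w w' : ℕ → M}
    (h : ∀ i < ℓ, w i = w' i) (k : ℕ) : mrColumn ℓ a w k = mrColumn ℓ a w' k := by
  have hmod : k % ℓ < ℓ := Nat.mod_lt k (Nat.pos_of_ne_zero hℓ)
  unfold mrColumn
  rw [prod_congr rfl fun i hi => h i ((mem_range.1 hi).trans hmod),
    prod_congr rfl fun i hi => h i (mem_range.1 hi)]

end Column

namespace PowerSeries

variable {R : Type*} [CommRing R]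

noncomputable def multisection (ℓ r : ℕ) (A : R⟦X⟧) : R⟦X⟧ :=
  mk fun k => coeff (ℓ * k + r) A

@[simp]
theorem coeff_multisection (ℓ r k : ℕ) (A : R⟦X⟧) :
    coeff k (multisection ℓ r A) = coeff (ℓ * k + r) A :=
  coeff_mk _ _

theorem eq_X_pow_mul_expand_multisection {ℓ r : ℕ} (hℓ : ℓ ≠ 0) {A : R⟦X⟧}
    (hA : ∀ n, n % ℓ ≠ r → coeff n A = 0) :
    A = X ^ r * expand ℓ hℓ (multisection ℓ r A) := by
  ext n
  rw [coeff_X_pow_mul', coeff_expand]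
  split_ifs with hrn hdvd
  · obtain ⟨j, hj⟩ := hdvd
    rw [hj, Nat.mul_div_cancel_left _ (Nat.pos_of_ne_zero hℓ), coeff_multisection, ← hj,
      Nat.sub_add_cancel hrn]
  · refine hA n fun hmod => hdvd ?_
    rw [← hmod]
    exact Nat.dvd_sub_mod n
  · exact hA n fun hmod => hrn (hmod ▸ Nat.mod_le n ℓ)

theorem coeff_X_pow_mul_expand {ℓ : ℕ} (hℓ : ℓ ≠ 0) (P : R⟦X⟧) (d k : ℕ) :
    coeff (ℓ * d + k) (X ^ k * expand ℓ hℓ P) = coeff (d + k) (X ^ k * P) := by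
  simp only [coeff_X_pow_mul, coeff_expand_mul]

end PowerSeries

theorem Nat.mul_sub_pred_mul {n k ℓ : ℕ} (hℓ : 0 < ℓ) (hk : k ≤ n) :
    n * ℓ - (ℓ - 1) * k = ℓ * (n - k) + k := by
  obtain ⟨c, rfl⟩ := Nat.exists_eq_add_of_le hk
  have hpred : (ℓ - 1) * k + k = ℓ * k := by
    rw [Nat.sub_one_mul, Nat.sub_add_cancel (Nat.le_mul_of_pos_left k hℓ)]
  rw [Nat.add_sub_cancel_left, Nat.sub_eq_iff_eq_add (by nlinarith), add_assoc,
    add_comm k ((ℓ - 1) * k), hpred]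
  ring

theorem stmt17_general {K : Type*} [Field K] (ℓ : ℕ) (hℓ : 2 ≤ ℓ)
    (g : K⟦X⟧) (f : ℕ → K⟦X⟧)
    (hg : ∀ n, ¬ (ℓ ∣ n) → coeff n g = 0)
    (hf : ∀ i < ℓ, ∀ n, n % ℓ ≠ 1 → coeff n (f i) = 0)
    (d : ℕ → ℕ → K) (hd : ∀ n k, d n k = mrEntry ℓ g f n k)
    (dhat : ℕ → ℕ → K) (hdhat : ∀ n k, dhat n k = d (n * ℓ - (ℓ - 1) * k) k)
    (ghat : K⟦X⟧) (hghat : ghat = PowerSeries.mk fun k => coeff (ℓ * k) g)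
    (fhat : ℕ → K⟦X⟧)
    (hfhat : ∀ i, fhat i =
      PowerSeries.mk fun n => if n = 0 then 0 else coeff (ℓ * (n - 1) + 1) (f i)) :
    ∀ n k, k ≤ n →
      dhat n k = coeff n (ghat * (∏ i ∈ Finset.range (k % ℓ), fhat i) *
        (∏ i ∈ Finset.range ℓ, fhat i) ^ (k / ℓ)) := by
  intro n k hkn
  have hℓ0 : ℓ ≠ 0 := by omega
  set G := multisection ℓ 0 g
  set φ := fun i => multisection ℓ 1 (f i)
  have hg_expand : g = expand ℓ hℓ0 G := by
    simpa using eq_X_pow_mul_expand_multisection hℓ0 fun n hn =>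
      hg n (mt Nat.mod_eq_zero_of_dvd hn)
  have hf_expand : ∀ i < ℓ, f i = X * expand ℓ hℓ0 (φ i) := fun i hi => by
    simpa using eq_X_pow_mul_expand_multisection hℓ0 (hf i hi)
  have hghat_eq : ghat = G := by rw [hghat]; rfl
  have hfhat_eq : fhat = fun i => X * φ i := by
    funext i
    ext (_ | n) <;> simp [hfhat, φ, coeff_succ_X_mul]
  have hcolumn : mrColumn ℓ g f k = X ^ k * expand ℓ hℓ0 (mrColumn ℓ G φ k) := by
    rw [mrColumn_congr hℓ0 g hf_expand, mrColumn_mul_left, hg_expand, map_mrColumn]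
  calc dhat n k = coeff (ℓ * (n - k) + k) (mrColumn ℓ g f k) := by
        rw [hdhat, hd, Nat.mul_sub_pred_mul (by omega) hkn, mrEntry_eq_coeff_mrColumn]
    _ = coeff (n - k + k) (X ^ k * mrColumn ℓ G φ k) := by
        rw [hcolumn, coeff_X_pow_mul_expand]
    _ = coeff n (mrColumn ℓ ghat fhat k) := by
        rw [Nat.sub_add_cancel hkn, hghat_eq, hfhat_eq, mrColumn_mul_left]

/-- The compression of a multiple Riordan array `(g; f_0, …, f_{ℓ-1})`: writing
`k = qℓ + m`, the entry `d̂_{n,k} = d_{nℓ−(ℓ−1)k,k}` is the `n`-th coefficient of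
`ĝ · f̂_0⋯f̂_{m-1} · (f̂_0⋯f̂_{ℓ-1})^q`, where `ĝ` and `f̂_i` are the compressed series. -/
theorem stmt17 {K : Type*} [Field K] [CharZero K] (ℓ : ℕ) (hℓ : 2 ≤ ℓ)
    (g : K⟦X⟧) (f : ℕ → K⟦X⟧)
    (hg : ∀ n, ¬ (ℓ ∣ n) → coeff n g = 0) (hg0 : constantCoeff g ≠ 0)
    (hf : ∀ i < ℓ, ∀ n, n % ℓ ≠ 1 → coeff n (f i) = 0)
    (hf1 : ∀ i < ℓ, coeff 1 (f i) ≠ 0)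
    (d : ℕ → ℕ → K) (hd : ∀ n k, d n k = mrEntry ℓ g f n k)
    (dhat : ℕ → ℕ → K) (hdhat : ∀ n k, dhat n k = d (n * ℓ - (ℓ - 1) * k) k)
    (ghat : K⟦X⟧) (hghat : ghat = PowerSeries.mk fun k => coeff (ℓ * k) g)
    (fhat : ℕ → K⟦X⟧)
    (hfhat : ∀ i, fhat i =
      PowerSeries.mk fun n => if n = 0 then 0 else coeff (ℓ * (n - 1) + 1) (f i)) :
    ∀ n k, k ≤ n →
      dhat n k = coeff n (ghat * (∏ i ∈ Finset.range (k % ℓ), fhat i) *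
        (∏ i ∈ Finset.range ℓ, fhat i) ^ (k / ℓ)) :=
  stmt17_general ℓ hℓ g f hg hf d hd dhat hdhat ghat hghat fhat hfhat
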